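/- arXiv:math/0210339 — 2 statements merged into one kernel-verified Lean document; each statement's English description precedes it below -/
import Mathlib

section
/- Let H be a fixed tree with h ≥ 2 edges. There exists a constant c > 0 such that for p = c·(log n)/n, the random graph G(n,p) almost surely does not contain ⌊e(G)/h⌋ pairwise edge-disjoint copies of H, i.e., almost surely does not have an optimal H-packing. -/
open Filter

namespace Paper

/-- Number of edges of a simple graph. -/
noncomputable def edgeCount {V : Type*} (G : SimpleGraph V) : ℕ := G.edgeSet.ncard

/-- Degree of a vertex. -/
noncomputable def deg {V : Type*} (G : SimpleGraph V) (v : V) : ℕ := (G.neighborSet v).ncard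

/-- Edges of `G` with one endpoint in `X` and the other outside `X`. -/
def crossEdges {V : Type*} (G : SimpleGraph V) (X : Set V) : Set (Sym2 V) :=
  {e ∈ G.edgeSet | ∃ a b, e = s(a, b) ∧ a ∈ X ∧ b ∉ X}

/-- Edges of `G` with both endpoints in `X`. -/
def insideEdges {V : Type*} (G : SimpleGraph V) (X : Set V) : Set (Sym2 V) :=
  {e ∈ G.edgeSet | ∀ x ∈ e, x ∈ X}

/-- `s` is the edge set of a copy of `H` inside `G`. -/
def IsCopy {W V : Type*} (H : SimpleGraph W) (G : SimpleGraph V) (s : Set (Sym2 V)) : Prop :=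
  ∃ φ : W → V, Function.Injective φ ∧ s = Sym2.map φ '' H.edgeSet ∧ s ⊆ G.edgeSet

/-- `G` is totally `F`-decomposable, `F = {H 0, …, H (k-1)}`. -/
def TotallyDecomposable {V : Type*} {k : ℕ} {v : Fin k → ℕ}
    (G : SimpleGraph V) (H : ∀ i, SimpleGraph (Fin (v i))) : Prop :=
  ∀ α : Fin k → ℕ, (∑ i, α i * edgeCount (H i)) = edgeCount G →
    ∃ f : (i : Fin k) → Fin (α i) → Set (Sym2 V),
      (∀ i j, IsCopy (H i) G (f i j)) ∧
      (∀ i j i' j', (⟨i, j⟩ : Σ i, Fin (α i)) ≠ ⟨i', j'⟩ → Disjoint (f i j) (f i' j')) ∧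
      (⋃ i, ⋃ j, f i j) = G.edgeSet

/-- `G` has `⌊e(G)/e(H)⌋` pairwise edge-disjoint copies of `H`. -/
def HasOptimalPacking {W V : Type*} (H : SimpleGraph W) (G : SimpleGraph V) : Prop :=
  ∃ f : Fin (edgeCount G / edgeCount H) → Set (Sym2 V),
    (∀ j, IsCopy H G (f j)) ∧ ∀ j j', j ≠ j' → Disjoint (f j) (f j')

/-- The edge set of `G` partitions into copies of `H`. -/
def HasDecomposition {W V : Type*} (H : SimpleGraph W) (G : SimpleGraph V) : Prop :=
  edgeCount H ∣ edgeCount G ∧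
  ∃ f : Fin (edgeCount G / edgeCount H) → Set (Sym2 V),
    (∀ j, IsCopy H G (f j)) ∧ (∀ j j', j ≠ j' → Disjoint (f j) (f j')) ∧
    (⋃ j, f j) = G.edgeSet

open scoped Classical in
/-- Probability that `G(n,p)` satisfies `A`. -/
noncomputable def erProb (n : ℕ) (p : ℝ) (A : SimpleGraph (Fin n) → Prop) : ℝ :=
  ∑ G : SimpleGraph (Fin n),
    if A G then p ^ edgeCount G * (1 - p) ^ (Nat.choose n 2 - edgeCount G) else 0

/-- The property `A` holds almost surely in `G(n, p n)`. -/
def AlmostSurely (p : ℕ → ℝ) (A : ∀ n, SimpleGraph (Fin n) → Prop) : Prop :=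
  Tendsto (fun n => erProb n (p n) (A n)) atTop (nhds 1)

/-- `G` is `r` edge-expanding. -/
def EdgeExpanding {V : Type*} [Fintype V] (G : SimpleGraph V) (r : ℝ) : Prop :=
  ∀ X : Finset V, X.Nonempty → (X.card : ℝ) ≤ (Fintype.card V : ℝ) / 2 →
    r * X.card ≤ ((crossEdges G ↑X).ncard : ℝ)


/-- `e` is an isolated edge of `G`. -/
def IsoEdge {V : Type*} (G : SimpleGraph V) (e : Sym2 V) : Prop :=
  e ∈ G.edgeSet ∧ ∀ f ∈ G.edgeSet, f ≠ e → ∀ x ∈ e, x ∉ f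

lemma walk_stay {V : Type*} {G : SimpleGraph V} {a b : V}
    (ha : ∀ y, G.Adj a y → y = b) (hb : ∀ y, G.Adj b y → y = a) :
    ∀ {s t : V}, G.Walk s t → (s = a ∨ s = b) → (t = a ∨ t = b) := by
  intro s t w
  induction w with
  | nil => exact id
  | cons h w ih =>
    rintro (rfl | rfl)
    · exact ih (Or.inr (ha _ h))
    · exact ih (Or.inl (hb _ h))

lemma exists_adjacent_edge {V : Type*} {H : SimpleGraph V} (hc : H.Connected)
    (hedge : 2 ≤ edgeCount H) {u : Sym2 V} (hu : u ∈ H.edgeSet) :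
    ∃ u' ∈ H.edgeSet, u' ≠ u ∧ ∃ x, x ∈ u ∧ x ∈ u' := by
  induction u with
  | _ a b =>
  by_contra hcon
  push_neg at hcon
  have hab : H.Adj a b := hu
  have hne : a ≠ b := hab.ne
  -- every neighbor of a is b
  have ha : ∀ y, H.Adj a y → y = b := by
    intro y hy
    by_contra hyb
    have h1 : s(a, y) ∈ H.edgeSet := hy
    have h2 : s(a, y) ≠ s(a, b) := fun hcontra => hyb (Sym2.congr_right.mp hcontra)
    exact hcon _ h1 h2 a (by simp) (by simp)
  have hb : ∀ y, H.Adj b y → y = a := by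
    intro y hy
    by_contra hyb
    have h1 : s(b, y) ∈ H.edgeSet := hy
    have h2 : s(b, y) ≠ s(a, b) := fun hcontra => by
      rw [Sym2.eq_swap (a := a)] at hcontra
      exact hyb (Sym2.congr_right.mp hcontra)
    exact hcon _ h1 h2 b (by simp) (by simp)
  -- there is another edge
  obtain ⟨f, hf, hfne⟩ := Set.exists_ne_of_one_lt_ncard (lt_of_lt_of_le one_lt_two hedge) s(a, b)
  -- f has a vertex outside {a, b}
  obtain ⟨x, hxf, hxa, hxb⟩ : ∃ x, x ∈ f ∧ x ≠ a ∧ x ≠ b := by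
    induction f with
    | _ c d =>
    have hcd : H.Adj c d := hf
    rcases eq_or_ne c a with rfl | hca
    · refine ⟨d, by simp, fun h => hcd.ne' h, fun h => hfne (by rw [h])⟩
    · rcases eq_or_ne c b with rfl | hcb
      · refine ⟨d, by simp, fun h => hfne (by rw [h, Sym2.eq_swap]), fun h => hcd.ne' h⟩
      · exact ⟨c, by simp, hca, hcb⟩
  obtain ⟨W⟩ := hc.preconnected a x
  rcases walk_stay ha hb W (Or.inl rfl) with rfl | rfl
  · exact hxa rfl
  · exact hxb rfl

lemma IsCopy.ncard_eq {W V : Type*} {H : SimpleGraph W} {G : SimpleGraph V} {s : Set (Sym2 V)}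
    (h : IsCopy H G s) : s.ncard = edgeCount H := by
  obtain ⟨φ, hinj, rfl, -⟩ := h
  exact Set.ncard_image_of_injective _ (Sym2.map.injective hinj)

lemma iso_notMem_copy {W V : Type*} {H : SimpleGraph W} {G : SimpleGraph V}
    {s : Set (Sym2 V)} {e : Sym2 V}
    (hc : H.Connected) (hedge : 2 ≤ edgeCount H)
    (hcopy : IsCopy H G s) (hiso : IsoEdge G e) : e ∉ s := by
  obtain ⟨φ, hinj, rfl, hsub⟩ := hcopy
  rintro ⟨u, hu, rfl⟩
  obtain ⟨u', hu', hune, x, hx, hx'⟩ := exists_adjacent_edge hc hedge hu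
  have h1 : Sym2.map φ u' ∈ G.edgeSet := hsub ⟨u', hu', rfl⟩
  have h2 : Sym2.map φ u' ≠ Sym2.map φ u := fun h => hune (Sym2.map.injective hinj h)
  exact hiso.2 _ h1 h2 (φ x) (Sym2.mem_map.2 ⟨x, hx, rfl⟩) (Sym2.mem_map.2 ⟨x, hx', rfl⟩)

open scoped Classical in
lemma edgeCount_eq_card_edgeFinset {n : ℕ} (G : SimpleGraph (Fin n)) :
    edgeCount G = G.edgeFinset.card := by
  simp [edgeCount, SimpleGraph.edgeFinset, Set.ncard_eq_toFinset_card']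

open scoped Classical in
lemma no_optimal_of_many_iso {w n : ℕ} {H : SimpleGraph (Fin w)} (htree : H.IsTree)
    (hedge : 2 ≤ edgeCount H) {G : SimpleGraph (Fin n)}
    (hiso : edgeCount H ≤ {e | IsoEdge G e}.ncard) : ¬ HasOptimalPacking H G := by
  rintro ⟨f, hcopy, hdisj⟩
  have hFin : ∀ j, (f j).Finite := fun j => Set.toFinite _
  set F : Fin (edgeCount G / edgeCount H) → Finset (Sym2 (Fin n)) := fun j => (hFin j).toFinset with hF
  have hcardF : ∀ j, (F j).card = edgeCount H := by
    intro j
    rw [hF, ← Set.ncard_eq_toFinset_card _ (hFin j), (hcopy j).ncard_eq]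
  set U : Finset (Sym2 (Fin n)) := Finset.univ.biUnion F with hU
  have hcardU : U.card = (edgeCount G / edgeCount H) * edgeCount H := by
    rw [hU, Finset.card_biUnion]
    · simp [hcardF, Finset.sum_const, Finset.card_univ]
    · intro j _ j' _ hne
      rw [hF]
      simp only [Set.Finite.disjoint_toFinset]
      exact hdisj j j' hne
  have hIfin : ({e | IsoEdge G e}).Finite := Set.toFinite _
  set I : Finset (Sym2 (Fin n)) := hIfin.toFinset with hI
  have hcardI : edgeCount H ≤ I.card := by rwa [hI, ← Set.ncard_eq_toFinset_card _ hIfin]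
  have hUE : U ⊆ G.edgeFinset := by
    intro e he
    rw [hU] at he
    obtain ⟨j, -, hej⟩ := Finset.mem_biUnion.1 he
    rw [hF, Set.Finite.mem_toFinset] at hej
    exact SimpleGraph.mem_edgeFinset.2 ((hcopy j).choose_spec.2.2 hej)
  have hIE : I ⊆ G.edgeFinset := by
    intro e he
    rw [hI, Set.Finite.mem_toFinset] at he
    exact SimpleGraph.mem_edgeFinset.2 he.1
  have hDisjUI : Disjoint U I := by
    rw [Finset.disjoint_left]
    intro e heU heI
    rw [hU, Finset.mem_biUnion] at heU
    obtain ⟨j, -, hej⟩ := heU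
    rw [hF, Set.Finite.mem_toFinset] at hej
    rw [hI, Set.Finite.mem_toFinset] at heI
    exact iso_notMem_copy htree.isConnected hedge (hcopy j) heI hej
  have hle : (edgeCount G / edgeCount H) * edgeCount H + edgeCount H ≤ edgeCount G := by
    calc (edgeCount G / edgeCount H) * edgeCount H + edgeCount H ≤ U.card + I.card := by omega
    _ = (U ∪ I).card := (Finset.card_union_of_disjoint hDisjUI).symm
    _ ≤ G.edgeFinset.card := Finset.card_le_card (Finset.union_subset hUE hIE)
    _ = edgeCount G := (edgeCount_eq_card_edgeFinset G).symm
  have hpos : 0 < edgeCount H := by omega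
  have h1 := Nat.div_add_mod (edgeCount G) (edgeCount H)
  have h2 := Nat.mod_lt (edgeCount G) hpos
  have h3 : (edgeCount G / edgeCount H) * edgeCount H = edgeCount H * (edgeCount G / edgeCount H) := Nat.mul_comm _ _
  omega



open scoped Classical

/-- The weight of a graph in the Erdős–Rényi model. -/
noncomputable def wt (n : ℕ) (p : ℝ) (G : SimpleGraph (Fin n)) : ℝ :=
  p ^ edgeCount G * (1 - p) ^ (Nat.choose n 2 - edgeCount G)

lemma wt_nonneg {n : ℕ} {p : ℝ} (hp0 : 0 ≤ p) (hp1 : p ≤ 1) (G : SimpleGraph (Fin n)) :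
    0 ≤ wt n p G :=
  mul_nonneg (pow_nonneg hp0 _) (pow_nonneg (by linarith) _)

/-- The potential edges. -/
noncomputable def slots (n : ℕ) : Finset (Sym2 (Fin n)) :=
  Finset.univ.filter (fun e => ¬ e.IsDiag)

lemma slots_card (n : ℕ) : (slots n).card = n.choose 2 := by
  have := Sym2.card_subtype_not_diag (α := Fin n)
  rw [Fintype.card_subtype] at this
  simpa [slots, Fintype.card_fin] using this

lemma edgeFinset_subset_slots {n : ℕ} (G : SimpleGraph (Fin n)) :
    G.edgeFinset ⊆ slots n := by
  intro e he
  rw [SimpleGraph.mem_edgeFinset] at he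
  simp only [slots, Finset.mem_filter, Finset.mem_univ, true_and]
  exact G.not_isDiag_of_mem_edgeSet he

lemma sum_powerset_prob {α : Type*} [DecidableEq α] (U : Finset α) (p : ℝ) :
    ∑ T ∈ U.powerset, p ^ T.card * (1 - p) ^ (U.card - T.card) = 1 := by
  have h := Finset.prod_add (fun _ : α => p) (fun _ : α => 1 - p) U
  simp only [add_sub_cancel, Finset.prod_const, one_pow] at h
  calc ∑ T ∈ U.powerset, p ^ T.card * (1 - p) ^ (U.card - T.card)
      = ∑ T ∈ U.powerset, p ^ T.card * (1 - p) ^ ((U \ T).card) := by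
        apply Finset.sum_congr rfl
        intro T hT
        rw [Finset.card_sdiff_of_subset (Finset.mem_powerset.1 hT)]
    _ = 1 := h.symm

/-- The key computation: the probability that all edges of `A` are present and
all edges of `B` are absent. -/
lemma prob_cond {n : ℕ} (p : ℝ) (A B : Finset (Sym2 (Fin n)))
    (hA : A ⊆ slots n) (hB : B ⊆ slots n) (hAB : Disjoint A B) :
    ∑ G : SimpleGraph (Fin n),
      (if A ⊆ G.edgeFinset ∧ Disjoint B G.edgeFinset then wt n p G else 0)
      = p ^ A.card * (1 - p) ^ B.card := by
  -- step 1 : sum over subsets of slots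
  have step1 : ∑ G : SimpleGraph (Fin n),
      (if A ⊆ G.edgeFinset ∧ Disjoint B G.edgeFinset then wt n p G else 0)
      = ∑ S ∈ (slots n).powerset,
        (if A ⊆ S ∧ Disjoint B S then p ^ S.card * (1 - p) ^ (n.choose 2 - S.card) else 0) := by
    refine Finset.sum_bij' (fun G _ => G.edgeFinset)
      (fun S _ => SimpleGraph.fromEdgeSet ↑S) ?_ ?_ ?_ ?_ ?_
    · intro G _
      exact Finset.mem_powerset.2 (edgeFinset_subset_slots G)
    · intro S _
      exact Finset.mem_univ _
    · intro G _
      simp only [SimpleGraph.coe_edgeFinset, SimpleGraph.fromEdgeSet_edgeSet]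
    · intro S hS
      rw [Finset.mem_powerset] at hS
      have hdiag : ∀ e ∈ S, ¬ e.IsDiag := by
        intro e he
        have := hS he
        simp only [slots, Finset.mem_filter] at this
        exact this.2
      apply Finset.coe_injective
      rw [SimpleGraph.coe_edgeFinset, SimpleGraph.edgeSet_fromEdgeSet]
      ext e
      simp only [Set.mem_diff, Finset.mem_coe, Set.mem_setOf_eq]
      exact ⟨fun h => h.1, fun h => ⟨h, hdiag e h⟩⟩
    · intro G _
      rw [wt, edgeCount_eq_card_edgeFinset]
  rw [step1, Finset.sum_ite, Finset.sum_const_zero, add_zero]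
  -- step 2 : reindex by T = S \ A
  set U := (slots n) \ (A ∪ B) with hU
  have hUcard : U.card + A.card + B.card = n.choose 2 := by
    rw [hU, Finset.card_sdiff_of_subset (Finset.union_subset hA hB), Finset.card_union_of_disjoint hAB,
      ← slots_card n]
    have := Finset.card_le_card (Finset.union_subset hA hB)
    rw [Finset.card_union_of_disjoint hAB] at this
    omega
  have step2 : ∑ S ∈ (slots n).powerset.filter (fun S => A ⊆ S ∧ Disjoint B S),
      p ^ S.card * (1 - p) ^ (n.choose 2 - S.card)
      = ∑ T ∈ U.powerset,
        (p ^ A.card * (1 - p) ^ B.card) * (p ^ T.card * (1 - p) ^ (U.card - T.card)) := by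
    refine Finset.sum_bij' (fun S _ => S \ A) (fun T _ => T ∪ A) ?_ ?_ ?_ ?_ ?_
    · intro S hS
      simp only [Finset.mem_filter, Finset.mem_powerset] at hS
      obtain ⟨hSslots, hAS, hBS⟩ := hS
      rw [Finset.mem_powerset, hU]
      intro x hx
      rw [Finset.mem_sdiff] at hx ⊢
      refine ⟨hSslots hx.1, ?_⟩
      rw [Finset.mem_union]
      rintro (h | h)
      · exact hx.2 h
      · exact (Finset.disjoint_left.1 hBS h) hx.1
    · intro T hT
      rw [Finset.mem_powerset] at hT
      simp only [Finset.mem_filter, Finset.mem_powerset]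
      have hTU : ∀ x ∈ T, x ∈ U := fun x hx => hT hx
      refine ⟨Finset.union_subset (fun x hx => ?_) hA, Finset.subset_union_right, ?_⟩
      · have := hTU x hx
        rw [hU, Finset.mem_sdiff] at this
        exact this.1
      · rw [Finset.disjoint_union_right]
        constructor
        · rw [Finset.disjoint_left]
          intro x hxB hxT
          have := hTU x hxT
          rw [hU, Finset.mem_sdiff, Finset.mem_union] at this
          exact this.2 (Or.inr hxB)
        · exact hAB.symm
    · intro S hS
      simp only [Finset.mem_filter, Finset.mem_powerset] at hS
      exact Finset.sdiff_union_of_subset hS.2.1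
    · intro T hT
      rw [Finset.mem_powerset] at hT
      have : Disjoint T A := by
        rw [Finset.disjoint_left]
        intro x hxT hxA
        have := hT hxT
        rw [hU, Finset.mem_sdiff, Finset.mem_union] at this
        exact this.2 (Or.inl hxA)
      exact Finset.union_sdiff_cancel_right this
    · intro S hS
      simp only [Finset.mem_filter, Finset.mem_powerset] at hS
      obtain ⟨hSslots, hAS, hBS⟩ := hS
      have hcard : (S \ A).card + A.card = S.card := Finset.card_sdiff_add_card_eq_card hAS
      have hTU : S \ A ⊆ U := by
        intro x hx
        rw [Finset.mem_sdiff] at hx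
        rw [hU, Finset.mem_sdiff, Finset.mem_union]
        exact ⟨hSslots hx.1, fun h => h.elim hx.2 (fun hB' => (Finset.disjoint_left.1 hBS hB') hx.1)⟩
      have hTle : (S \ A).card ≤ U.card := Finset.card_le_card hTU
      have hSle : S.card ≤ n.choose 2 := by rw [← slots_card n]; exact Finset.card_le_card hSslots
      have hexp : n.choose 2 - S.card = B.card + (U.card - (S \ A).card) := by omega
      rw [hexp, pow_add, ← hcard, pow_add]
      ring
  rw [step2, ← Finset.mul_sum, sum_powerset_prob, mul_one]

/-- Total probability is 1. -/
lemma sum_wt (n : ℕ) (p : ℝ) : ∑ G : SimpleGraph (Fin n), wt n p G = 1 := by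
  have := prob_cond (n := n) p ∅ ∅ (by simp) (by simp) (by simp)
  simpa using this



/-- The potential edges incident to exactly one of `a`, `b`. -/
noncomputable def pairB {n : ℕ} (a b : Fin n) : Finset (Sym2 (Fin n)) :=
  ((Finset.univ.filter (fun x => x ≠ a ∧ x ≠ b)).image (fun x => s(a, x))) ∪
  ((Finset.univ.filter (fun x => x ≠ a ∧ x ≠ b)).image (fun x => s(b, x)))

lemma mem_pairB {n : ℕ} {a b : Fin n} {e : Sym2 (Fin n)} :
    e ∈ pairB a b ↔ ∃ x, x ≠ a ∧ x ≠ b ∧ (e = s(a, x) ∨ e = s(b, x)) := by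
  simp only [pairB, Finset.mem_union, Finset.mem_image, Finset.mem_filter, Finset.mem_univ,
    true_and]
  constructor
  · rintro (⟨x, ⟨h1, h2⟩, rfl⟩ | ⟨x, ⟨h1, h2⟩, rfl⟩)
    · exact ⟨x, h1, h2, Or.inl rfl⟩
    · exact ⟨x, h1, h2, Or.inr rfl⟩
  · rintro ⟨x, h1, h2, rfl | rfl⟩
    · exact Or.inl ⟨x, ⟨h1, h2⟩, rfl⟩
    · exact Or.inr ⟨x, ⟨h1, h2⟩, rfl⟩

lemma pairB_subset_slots {n : ℕ} (a b : Fin n) : pairB a b ⊆ slots n := by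
  intro e he
  rw [mem_pairB] at he
  obtain ⟨x, h1, h2, rfl | rfl⟩ := he <;>
    simp [slots, Sym2.mk_isDiag_iff] <;> [exact fun h => h1 h.symm; exact fun h => h2 h.symm]

lemma card_pairB {n : ℕ} {a b : Fin n} (hab : a ≠ b) : (pairB a b).card = 2 * (n - 2) := by
  have hfilter : (Finset.univ.filter (fun x => x ≠ a ∧ x ≠ b) : Finset (Fin n)).card = n - 2 := by
    have : (Finset.univ.filter (fun x => x ≠ a ∧ x ≠ b) : Finset (Fin n))
        = Finset.univ \ {a, b} := by
      ext x; simp [not_or]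
    rw [this, Finset.card_sdiff_of_subset (by simp), Finset.card_pair hab, Finset.card_univ,
      Fintype.card_fin]
  have hinj1 : Set.InjOn (fun x => s(a, x)) (Finset.univ.filter (fun x => x ≠ a ∧ x ≠ b)) :=
    fun x _ y _ h => Sym2.congr_right.mp h
  have hinj2 : Set.InjOn (fun x => s(b, x)) (Finset.univ.filter (fun x => x ≠ a ∧ x ≠ b)) :=
    fun x _ y _ h => Sym2.congr_right.mp h
  have hdisj : Disjoint
      ((Finset.univ.filter (fun x => x ≠ a ∧ x ≠ b)).image (fun x => s(a, x)))
      ((Finset.univ.filter (fun x => x ≠ a ∧ x ≠ b)).image (fun x => s(b, x))) := by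
    rw [Finset.disjoint_left]
    rintro e he1 he2
    obtain ⟨x, hx, rfl⟩ := Finset.mem_image.1 he1
    obtain ⟨y, hy, hxy⟩ := Finset.mem_image.1 he2
    rw [Finset.mem_filter] at hx hy
    rw [Sym2.eq_iff] at hxy
    rcases hxy with ⟨h1', _⟩ | ⟨h1', _⟩
    · exact hab h1'.symm
    · exact hx.2.2 h1'.symm
  rw [pairB, Finset.card_union_of_disjoint hdisj, Finset.card_image_of_injOn hinj1,
    Finset.card_image_of_injOn hinj2, hfilter]
  ring

lemma base_notMem_pairB {n : ℕ} {a b : Fin n} (hab : a ≠ b) : s(a, b) ∉ pairB a b := by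
  rw [mem_pairB]
  rintro ⟨x, h1, h2, h | h⟩
  · exact h2 (Sym2.congr_right.mp h).symm
  · rw [Sym2.eq_swap (a := a)] at h
    exact h1 (Sym2.congr_right.mp h).symm

/-- Characterization of being an isolated edge. -/
lemma iso_iff_cond {n : ℕ} {a b : Fin n} (hab : a ≠ b) (G : SimpleGraph (Fin n)) :
    IsoEdge G s(a, b) ↔
      ({s(a, b)} : Finset (Sym2 (Fin n))) ⊆ G.edgeFinset ∧ Disjoint (pairB a b) G.edgeFinset := by
  constructor
  · rintro ⟨hmem, hiso⟩
    refine ⟨Finset.singleton_subset_iff.2 (SimpleGraph.mem_edgeFinset.2 hmem), ?_⟩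
    rw [Finset.disjoint_left]
    intro e he hef
    rw [SimpleGraph.mem_edgeFinset] at hef
    rw [mem_pairB] at he
    obtain ⟨x, h1, h2, rfl | rfl⟩ := he
    · have hne : s(a, x) ≠ s(a, b) := fun h => h2 (Sym2.congr_right.mp h)
      exact hiso _ hef hne a (by simp) (by simp)
    · have hne : s(b, x) ≠ s(a, b) := fun h => by
        rw [Sym2.eq_swap (a := a)] at h
        exact h1 (Sym2.congr_right.mp h)
      exact hiso _ hef hne b (by simp) (by simp)
  · rintro ⟨hsub, hdisj⟩
    have hmem : s(a, b) ∈ G.edgeSet :=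
      SimpleGraph.mem_edgeFinset.1 (hsub (Finset.mem_singleton_self _))
    refine ⟨hmem, ?_⟩
    intro f hf hne x hx hxf
    obtain ⟨y, rfl⟩ := Sym2.mem_iff_exists.1 hxf
    have hyx : y ≠ x := by
      intro h
      exact G.not_isDiag_of_mem_edgeSet hf (by rw [h]; exact Sym2.mk_isDiag_iff.2 rfl)
    rw [Sym2.mem_iff] at hx
    have hfB : s(x, y) ∈ pairB a b := by
      rw [mem_pairB]
      rcases hx with rfl | rfl
      · refine ⟨y, fun h => hyx h, fun h => hne (by rw [h]), Or.inl rfl⟩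
      · refine ⟨y, fun h => hne (by rw [h, Sym2.eq_swap]), fun h => hyx h, Or.inr rfl⟩
    exact (Finset.disjoint_left.1 hdisj hfB) (SimpleGraph.mem_edgeFinset.2 hf)


section Pairs
variable {n : ℕ} {a b c d : Fin n}

lemma base_mem_slots (hab : a ≠ b) : s(a, b) ∈ slots n := by
  simp [slots, Sym2.mk_isDiag_iff, hab]

lemma pairB_inter_subset (hac : a ≠ c) (had : a ≠ d) (hbc : b ≠ c) (hbd : b ≠ d) :
    pairB a b ∩ pairB c d ⊆ {s(a, c), s(a, d), s(b, c), s(b, d)} := by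
  intro e he
  rw [Finset.mem_inter, mem_pairB, mem_pairB] at he
  obtain ⟨⟨x, hx1, hx2, hex⟩, ⟨y, hy1, hy2, hey⟩⟩ := he
  simp only [Finset.mem_insert, Finset.mem_singleton]
  rcases hex with rfl | rfl <;> rcases hey with hey | hey <;> rw [Sym2.eq_iff] at hey
  · rcases hey with ⟨h, _⟩ | ⟨_, h⟩
    · exact absurd h hac
    · rw [h]; tauto
  · rcases hey with ⟨h, _⟩ | ⟨_, h⟩
    · exact absurd h had
    · rw [h]; tauto
  · rcases hey with ⟨h, _⟩ | ⟨_, h⟩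
    · exact absurd h hbc
    · rw [h]; tauto
  · rcases hey with ⟨h, _⟩ | ⟨_, h⟩
    · exact absurd h hbd
    · rw [h]; tauto

lemma notMem_pairB_of_ne (hca : c ≠ a) (hcb : c ≠ b) (hda : d ≠ a) (hdb : d ≠ b) :
    s(c, d) ∉ pairB a b := by
  rw [mem_pairB]
  rintro ⟨x, hx1, hx2, h | h⟩ <;> rw [Sym2.eq_iff] at h
  · rcases h with ⟨h, _⟩ | ⟨_, h⟩
    · exact hca h
    · exact hda h
  · rcases h with ⟨h, _⟩ | ⟨_, h⟩
    · exact hcb h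
    · exact hdb h

lemma base_ne (hac : a ≠ c) (had : a ≠ d) : s(a, b) ≠ s(c, d) := by
  intro h
  rw [Sym2.eq_iff] at h
  rcases h with ⟨h, _⟩ | ⟨h, _⟩
  · exact hac h
  · exact had h

lemma prob_iso (hab : a ≠ b) (p : ℝ) :
    (∑ G : SimpleGraph (Fin n), if IsoEdge G s(a, b) then wt n p G else 0)
      = p * (1 - p) ^ (2 * (n - 2)) := by
  have h := prob_cond p {s(a, b)} (pairB a b)
    (by simpa using base_mem_slots hab) (pairB_subset_slots a b)
    (Finset.disjoint_singleton_left.2 (base_notMem_pairB hab))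
  calc (∑ G : SimpleGraph (Fin n), if IsoEdge G s(a, b) then wt n p G else 0)
      = ∑ G : SimpleGraph (Fin n),
          (if ({s(a, b)} : Finset (Sym2 (Fin n))) ⊆ G.edgeFinset ∧
              Disjoint (pairB a b) G.edgeFinset then wt n p G else 0) := by
        exact Finset.sum_congr rfl fun G _ => if_congr (iso_iff_cond hab G) rfl rfl
    _ = p ^ ({s(a, b)} : Finset (Sym2 (Fin n))).card * (1 - p) ^ (pairB a b).card := h
    _ = p * (1 - p) ^ (2 * (n - 2)) := by
        rw [Finset.card_singleton, pow_one, card_pairB hab]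

lemma pair_iso_iff (hab : a ≠ b) (hcd : c ≠ d) (G : SimpleGraph (Fin n)) :
    (IsoEdge G s(a, b) ∧ IsoEdge G s(c, d)) ↔
      (({s(a, b), s(c, d)} : Finset (Sym2 (Fin n))) ⊆ G.edgeFinset ∧
        Disjoint (pairB a b ∪ pairB c d) G.edgeFinset) := by
  rw [iso_iff_cond hab, iso_iff_cond hcd, Finset.insert_subset_iff, Finset.singleton_subset_iff,
    Finset.singleton_subset_iff, Finset.disjoint_union_left]
  tauto

lemma prob_pair_le {p : ℝ} (hp0 : 0 ≤ p) (hp1 : p ≤ 1) (hab : a ≠ b) (hcd : c ≠ d)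
    (hac : a ≠ c) (had : a ≠ d) (hbc : b ≠ c) (hbd : b ≠ d) :
    (∑ G : SimpleGraph (Fin n), if IsoEdge G s(a, b) ∧ IsoEdge G s(c, d) then wt n p G else 0)
      ≤ p ^ 2 * (1 - p) ^ (4 * (n - 2) - 4) := by
  have hAslots : ({s(a, b), s(c, d)} : Finset (Sym2 (Fin n))) ⊆ slots n := by
    intro e he
    rcases Finset.mem_insert.1 he with rfl | he
    · exact base_mem_slots hab
    · rw [Finset.mem_singleton] at he; subst he; exact base_mem_slots hcd
  have hBslots : pairB a b ∪ pairB c d ⊆ slots n :=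
    Finset.union_subset (pairB_subset_slots a b) (pairB_subset_slots c d)
  have hABdisj : Disjoint ({s(a, b), s(c, d)} : Finset (Sym2 (Fin n)))
      (pairB a b ∪ pairB c d) := by
    rw [Finset.disjoint_left]
    intro e he heB
    rcases Finset.mem_insert.1 he with rfl | he
    · rcases Finset.mem_union.1 heB with h | h
      · exact base_notMem_pairB hab h
      · exact notMem_pairB_of_ne hac had hbc hbd h
    · rw [Finset.mem_singleton] at he; subst he
      rcases Finset.mem_union.1 heB with h | h
      · exact notMem_pairB_of_ne hac.symm hbc.symm had.symm hbd.symm h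
      · exact base_notMem_pairB hcd h
  have h := prob_cond p ({s(a, b), s(c, d)} : Finset (Sym2 (Fin n)))
    (pairB a b ∪ pairB c d) hAslots hBslots hABdisj
  have hcardA : ({s(a, b), s(c, d)} : Finset (Sym2 (Fin n))).card = 2 := by
    rw [Finset.card_insert_of_notMem (by simp [base_ne hac had]), Finset.card_singleton]
  have hcardB : 4 * (n - 2) - 4 ≤ (pairB a b ∪ pairB c d).card := by
    have h1 := Finset.card_union_add_card_inter (pairB a b) (pairB c d)
    have h2 : (pairB a b ∩ pairB c d).card ≤ 4 := by
      refine le_trans (Finset.card_le_card (pairB_inter_subset hac had hbc hbd)) ?_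
      refine le_trans (Finset.card_insert_le _ _) ?_
      refine le_trans (Nat.succ_le_succ (Finset.card_insert_le _ _)) ?_
      refine le_trans (Nat.succ_le_succ (Nat.succ_le_succ (Finset.card_insert_le _ _))) ?_
      simp
    have h3 := card_pairB hab
    have h4 := card_pairB hcd
    omega
  calc (∑ G : SimpleGraph (Fin n), if IsoEdge G s(a, b) ∧ IsoEdge G s(c, d) then wt n p G else 0)
      = ∑ G : SimpleGraph (Fin n),
          (if ({s(a, b), s(c, d)} : Finset (Sym2 (Fin n))) ⊆ G.edgeFinset ∧
              Disjoint (pairB a b ∪ pairB c d) G.edgeFinset then wt n p G else 0) :=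
        Finset.sum_congr rfl fun G _ => if_congr (pair_iso_iff hab hcd G) rfl rfl
    _ = p ^ 2 * (1 - p) ^ (pairB a b ∪ pairB c d).card := by rw [h, hcardA]
    _ ≤ p ^ 2 * (1 - p) ^ (4 * (n - 2) - 4) := by
        apply mul_le_mul_of_nonneg_left _ (pow_nonneg hp0 2)
        exact pow_le_pow_of_le_one (by linarith) (by linarith) hcardB

lemma prob_pair_zero {p : ℝ} (hne : s(a, b) ≠ s(c, d))
    (hshare : a = c ∨ a = d ∨ b = c ∨ b = d) :
    (∑ G : SimpleGraph (Fin n), if IsoEdge G s(a, b) ∧ IsoEdge G s(c, d) then wt n p G else 0)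
      = 0 := by
  apply Finset.sum_eq_zero
  intro G _
  rw [if_neg]
  rintro ⟨h1, h2⟩
  have hx : ∃ x, x ∈ s(a, b) ∧ x ∈ s(c, d) := by
    rcases hshare with rfl | rfl | rfl | rfl
    · exact ⟨a, by simp, by simp⟩
    · exact ⟨a, by simp, by simp⟩
    · exact ⟨b, by simp, by simp⟩
    · exact ⟨b, by simp, by simp⟩
  obtain ⟨x, hx1, hx2⟩ := hx
  exact h1.2 _ h2.1 (fun h => hne h.symm) x hx1 hx2

end Pairs

section Moments
variable {n : ℕ}

/-- Number of (ordered) isolated pairs. -/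
noncomputable def isoCount {n : ℕ} (G : SimpleGraph (Fin n)) : ℕ :=
  ((Finset.univ : Finset (Fin n)).offDiag.filter (fun z => IsoEdge G s(z.1, z.2))).card

lemma offDiag_card' : ((Finset.univ : Finset (Fin n)).offDiag).card = n * n - n := by
  rw [Finset.offDiag_card, Finset.card_univ, Fintype.card_fin]

lemma isoCount_cast (G : SimpleGraph (Fin n)) :
    ((isoCount G : ℝ)) = ∑ z ∈ (Finset.univ : Finset (Fin n)).offDiag,
      (if IsoEdge G s(z.1, z.2) then (1 : ℝ) else 0) := by
  rw [isoCount, Finset.card_filter, Nat.cast_sum]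
  exact Finset.sum_congr rfl fun z _ => by split_ifs <;> simp

lemma first_moment (p : ℝ) :
    ∑ G : SimpleGraph (Fin n), wt n p G * (isoCount G : ℝ)
      = ((n * n - n : ℕ) : ℝ) * (p * (1 - p) ^ (2 * (n - 2))) := by
  calc ∑ G : SimpleGraph (Fin n), wt n p G * (isoCount G : ℝ)
      = ∑ G : SimpleGraph (Fin n), ∑ z ∈ (Finset.univ : Finset (Fin n)).offDiag,
          (if IsoEdge G s(z.1, z.2) then wt n p G else 0) := by
        refine Finset.sum_congr rfl fun G _ => ?_
        rw [isoCount_cast, Finset.mul_sum]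
        exact Finset.sum_congr rfl fun z _ => by split_ifs <;> simp
    _ = ∑ z ∈ (Finset.univ : Finset (Fin n)).offDiag, ∑ G : SimpleGraph (Fin n),
          (if IsoEdge G s(z.1, z.2) then wt n p G else 0) := Finset.sum_comm
    _ = ∑ z ∈ (Finset.univ : Finset (Fin n)).offDiag, p * (1 - p) ^ (2 * (n - 2)) := by
        refine Finset.sum_congr rfl fun z hz => ?_
        exact prob_iso (Finset.mem_offDiag.1 hz).2.2 p
    _ = ((n * n - n : ℕ) : ℝ) * (p * (1 - p) ^ (2 * (n - 2))) := by
        rw [Finset.sum_const, offDiag_card', nsmul_eq_mul]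

lemma inner_bound {p : ℝ} (hp0 : 0 ≤ p) (hp1 : p ≤ 1) {a b : Fin n} (hab : a ≠ b) :
    ∑ w ∈ (Finset.univ : Finset (Fin n)).offDiag, ∑ G : SimpleGraph (Fin n),
        (if IsoEdge G s(a, b) ∧ IsoEdge G s(w.1, w.2) then wt n p G else 0)
      ≤ 2 * (p * (1 - p) ^ (2 * (n - 2)))
        + ((n * n - n : ℕ) : ℝ) * (p ^ 2 * (1 - p) ^ (4 * (n - 2) - 4)) := by
  set P := (Finset.univ : Finset (Fin n)).offDiag with hP
  set q := p * (1 - p) ^ (2 * (n - 2)) with hq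
  set r := p ^ 2 * (1 - p) ^ (4 * (n - 2) - 4) with hr
  have hr0 : 0 ≤ r := mul_nonneg (pow_nonneg hp0 2) (pow_nonneg (by linarith) _)
  have hpairsub : ({(a, b), (b, a)} : Finset (Fin n × Fin n)) ⊆ P := by
    intro z hz
    rcases Finset.mem_insert.1 hz with rfl | hz
    · exact Finset.mem_offDiag.2 ⟨Finset.mem_univ _, Finset.mem_univ _, hab⟩
    · rw [Finset.mem_singleton] at hz; subst hz
      exact Finset.mem_offDiag.2 ⟨Finset.mem_univ _, Finset.mem_univ _, hab.symm⟩
  have hsplit : P = ({(a, b), (b, a)} : Finset (Fin n × Fin n)) ∪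
      (P \ {(a, b), (b, a)}) := (Finset.union_sdiff_of_subset hpairsub).symm
  rw [hsplit, Finset.sum_union Finset.disjoint_sdiff]
  have hterm1 : ∑ w ∈ ({(a, b), (b, a)} : Finset (Fin n × Fin n)),
      ∑ G : SimpleGraph (Fin n),
        (if IsoEdge G s(a, b) ∧ IsoEdge G s(w.1, w.2) then wt n p G else 0) = 2 * q := by
    rw [Finset.sum_pair (by simp [hab] : ((a, b) : Fin n × Fin n) ≠ (b, a))]
    have e1 : ∑ G : SimpleGraph (Fin n),
        (if IsoEdge G s(a, b) ∧ IsoEdge G s(a, b) then wt n p G else 0) = q := by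
      rw [hq, ← prob_iso hab p]
      exact Finset.sum_congr rfl fun G _ => if_congr and_self_iff rfl rfl
    have e2 : ∑ G : SimpleGraph (Fin n),
        (if IsoEdge G s(a, b) ∧ IsoEdge G s(b, a) then wt n p G else 0) = q := by
      rw [hq, ← prob_iso hab p]
      refine Finset.sum_congr rfl fun G _ => if_congr ?_ rfl rfl
      rw [Sym2.eq_swap (a := b)]
      exact and_self_iff
    rw [e1, e2]; ring
  have hterm2 : ∑ w ∈ P \ ({(a, b), (b, a)} : Finset (Fin n × Fin n)),
      ∑ G : SimpleGraph (Fin n),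
        (if IsoEdge G s(a, b) ∧ IsoEdge G s(w.1, w.2) then wt n p G else 0)
      ≤ ((n * n - n : ℕ) : ℝ) * r := by
    have hle : ∀ w ∈ P \ ({(a, b), (b, a)} : Finset (Fin n × Fin n)),
        ∑ G : SimpleGraph (Fin n),
          (if IsoEdge G s(a, b) ∧ IsoEdge G s(w.1, w.2) then wt n p G else 0) ≤ r := by
      rintro ⟨c, d⟩ hw
      rw [Finset.mem_sdiff] at hw
      obtain ⟨hwP, hwpair⟩ := hw
      have hcd : c ≠ d := (Finset.mem_offDiag.1 hwP).2.2
      have hne : s(a, b) ≠ s(c, d) := by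
        intro h
        rw [Sym2.eq_iff] at h
        apply hwpair
        rcases h with ⟨rfl, rfl⟩ | ⟨rfl, rfl⟩
        · simp
        · simp
      by_cases hshare : a = c ∨ a = d ∨ b = c ∨ b = d
      · rw [prob_pair_zero hne hshare]; exact hr0
      · push_neg at hshare
        exact prob_pair_le hp0 hp1 hab hcd hshare.1 hshare.2.1 hshare.2.2.1 hshare.2.2.2
    calc ∑ w ∈ P \ ({(a, b), (b, a)} : Finset (Fin n × Fin n)),
        ∑ G : SimpleGraph (Fin n),
          (if IsoEdge G s(a, b) ∧ IsoEdge G s(w.1, w.2) then wt n p G else 0)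
        ≤ ∑ _w ∈ P \ ({(a, b), (b, a)} : Finset (Fin n × Fin n)), r := Finset.sum_le_sum hle
      _ = ((P \ ({(a, b), (b, a)} : Finset (Fin n × Fin n))).card : ℝ) * r := by
          rw [Finset.sum_const, nsmul_eq_mul]
      _ ≤ ((n * n - n : ℕ) : ℝ) * r := by
          apply mul_le_mul_of_nonneg_right _ hr0
          have := Finset.card_le_card (Finset.sdiff_subset (s := P)
            (t := ({(a, b), (b, a)} : Finset (Fin n × Fin n))))
          rw [offDiag_card'] at this
          exact_mod_cast this
  linarith [hterm1, hterm2]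

lemma second_moment {p : ℝ} (hp0 : 0 ≤ p) (hp1 : p ≤ 1) :
    ∑ G : SimpleGraph (Fin n), wt n p G * (isoCount G : ℝ) ^ 2
      ≤ ((n * n - n : ℕ) : ℝ) * (2 * (p * (1 - p) ^ (2 * (n - 2)))
          + ((n * n - n : ℕ) : ℝ) * (p ^ 2 * (1 - p) ^ (4 * (n - 2) - 4))) := by
  set P := (Finset.univ : Finset (Fin n)).offDiag with hP
  have expand : ∑ G : SimpleGraph (Fin n), wt n p G * (isoCount G : ℝ) ^ 2
      = ∑ z ∈ P, ∑ w ∈ P, ∑ G : SimpleGraph (Fin n),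
          (if IsoEdge G s(z.1, z.2) ∧ IsoEdge G s(w.1, w.2) then wt n p G else 0) := by
    have h1 : ∀ G : SimpleGraph (Fin n), wt n p G * (isoCount G : ℝ) ^ 2
        = ∑ z ∈ P, ∑ w ∈ P,
            (if IsoEdge G s(z.1, z.2) ∧ IsoEdge G s(w.1, w.2) then wt n p G else 0) := by
      intro G
      rw [sq, isoCount_cast]
      rw [Finset.sum_mul_sum]
      rw [Finset.mul_sum]
      refine Finset.sum_congr rfl fun z _ => ?_
      rw [Finset.mul_sum]
      refine Finset.sum_congr rfl fun w _ => ?_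
      split_ifs with h1 h2 h3 <;> simp_all
    rw [Finset.sum_congr rfl fun G _ => h1 G, Finset.sum_comm]
    exact Finset.sum_congr rfl fun z _ => Finset.sum_comm
  rw [expand]
  calc ∑ z ∈ P, ∑ w ∈ P, ∑ G : SimpleGraph (Fin n),
        (if IsoEdge G s(z.1, z.2) ∧ IsoEdge G s(w.1, w.2) then wt n p G else 0)
      ≤ ∑ _z ∈ P, (2 * (p * (1 - p) ^ (2 * (n - 2)))
          + ((n * n - n : ℕ) : ℝ) * (p ^ 2 * (1 - p) ^ (4 * (n - 2) - 4))) := by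
        refine Finset.sum_le_sum fun z hz => ?_
        exact inner_bound hp0 hp1 (Finset.mem_offDiag.1 hz).2.2
    _ = _ := by rw [Finset.sum_const, offDiag_card', nsmul_eq_mul]

end Moments

lemma bridge {n : ℕ} (G : SimpleGraph (Fin n)) (h : ℕ) (hY : 2 * h ≤ isoCount G) :
    h ≤ {e | IsoEdge G e}.ncard := by
  set T := ((Finset.univ : Finset (Fin n)).offDiag.filter (fun z => IsoEdge G s(z.1, z.2)))
    with hT
  have hfin : ({e | IsoEdge G e}).Finite := Set.toFinite _
  have himg : T.image (fun z : Fin n × Fin n => s(z.1, z.2)) ⊆ hfin.toFinset := by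
    intro e he
    obtain ⟨z, hz, rfl⟩ := Finset.mem_image.1 he
    rw [Set.Finite.mem_toFinset]
    exact (Finset.mem_filter.1 hz).2
  have hcard : T.card ≤ 2 * (T.image (fun z : Fin n × Fin n => s(z.1, z.2))).card := by
    apply Finset.card_le_mul_card_image
    intro e he
    obtain ⟨z0, hz0, rfl⟩ := Finset.mem_image.1 he
    have hsub : T.filter (fun z => s(z.1, z.2) = s(z0.1, z0.2)) ⊆ {z0, (z0.2, z0.1)} := by
      intro z hz
      rw [Finset.mem_filter] at hz
      have h2 := hz.2
      rw [Sym2.eq_iff] at h2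
      rcases h2 with ⟨h1, h2⟩ | ⟨h1, h2⟩
      · simp [Prod.ext_iff, h1, h2]
      · simp [Prod.ext_iff, h1, h2]
    refine le_trans (Finset.card_le_card hsub) ?_
    refine le_trans (Finset.card_insert_le _ _) ?_
    simp
  have hfinal : T.card ≤ 2 * {e | IsoEdge G e}.ncard := by
    rw [Set.ncard_eq_toFinset_card _ hfin]
    exact le_trans hcard (Nat.mul_le_mul_left 2 (Finset.card_le_card himg))
  have hY' : 2 * h ≤ T.card := hY
  omega

lemma erProb_eq_sum_wt (n : ℕ) (p : ℝ) (A : SimpleGraph (Fin n) → Prop) :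
    erProb n p A = ∑ G : SimpleGraph (Fin n), if A G then wt n p G else 0 := rfl

lemma chebyshev {n : ℕ} {p : ℝ} (hp0 : 0 ≤ p) (hp1 : p ≤ 1)
    (A : SimpleGraph (Fin n) → Prop) (K : ℝ)
    (hA : ∀ G, A G → (isoCount G : ℝ) ≤ K)
    (hK : K ≤ ((n * n - n : ℕ) : ℝ) * (p * (1 - p) ^ (2 * (n - 2)))) :
    erProb n p A * (((n * n - n : ℕ) : ℝ) * (p * (1 - p) ^ (2 * (n - 2))) - K) ^ 2
      ≤ ∑ G : SimpleGraph (Fin n), wt n p G * (isoCount G : ℝ) ^ 2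
        - (((n * n - n : ℕ) : ℝ) * (p * (1 - p) ^ (2 * (n - 2)))) ^ 2 := by
  set M := ((n * n - n : ℕ) : ℝ) * (p * (1 - p) ^ (2 * (n - 2))) with hM
  have hEY := first_moment (n := n) p
  rw [← hM] at hEY
  have hsum := sum_wt n p
  have hexp : ∑ G : SimpleGraph (Fin n), wt n p G * ((isoCount G : ℝ) - M) ^ 2
      = ∑ G : SimpleGraph (Fin n), wt n p G * (isoCount G : ℝ) ^ 2 - M ^ 2 := by
    have hterm : ∀ G : SimpleGraph (Fin n), wt n p G * ((isoCount G : ℝ) - M) ^ 2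
        = wt n p G * (isoCount G : ℝ) ^ 2 - 2 * M * (wt n p G * (isoCount G : ℝ))
          + M ^ 2 * wt n p G := fun G => by ring
    rw [Finset.sum_congr rfl fun G _ => hterm G, Finset.sum_add_distrib,
      Finset.sum_sub_distrib, ← Finset.mul_sum, ← Finset.mul_sum, hEY, hsum]
    ring
  rw [← hexp, erProb_eq_sum_wt, Finset.sum_mul]
  refine Finset.sum_le_sum fun G _ => ?_
  by_cases hAG : A G
  · rw [if_pos hAG]
    have hYK := hA G hAG
    have hsq : (M - K) ^ 2 ≤ ((isoCount G : ℝ) - M) ^ 2 := by nlinarith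
    exact mul_le_mul_of_nonneg_left hsq (wt_nonneg hp0 hp1 G)
  · rw [if_neg hAG, zero_mul]
    exact mul_nonneg (wt_nonneg hp0 hp1 G) (sq_nonneg _)

lemma main_bound {w n : ℕ} (H : SimpleGraph (Fin w)) (htree : H.IsTree)
    (hedge : 2 ≤ edgeCount H) {p : ℝ} (hn : 3 ≤ n) (hp0 : 0 ≤ p) (hp : p ≤ 1 / 2)
    (hM : 2 * (edgeCount H : ℝ)
        ≤ ((n * n - n : ℕ) : ℝ) * (p * (1 - p) ^ (2 * (n - 2)))) :
    erProb n p (fun G => HasOptimalPacking H G)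
      ≤ (2 * (((n * n - n : ℕ) : ℝ) * (p * (1 - p) ^ (2 * (n - 2))))
          + (((n * n - n : ℕ) : ℝ) * (p * (1 - p) ^ (2 * (n - 2)))) ^ 2
            * (((1 - p) ^ 4)⁻¹ - 1))
        / ((((n * n - n : ℕ) : ℝ) * (p * (1 - p) ^ (2 * (n - 2))))
            - (2 * (edgeCount H : ℝ) - 1)) ^ 2 := by
  set C := ((n * n - n : ℕ) : ℝ) with hC
  set q := p * (1 - p) ^ (2 * (n - 2)) with hq
  set M := C * q with hMdef
  set K := 2 * (edgeCount H : ℝ) - 1 with hK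
  have hp1 : p ≤ 1 := by linarith
  have h1p : (0 : ℝ) < 1 - p := by linarith
  have hA : ∀ G : SimpleGraph (Fin n), HasOptimalPacking H G → (isoCount G : ℝ) ≤ K := by
    intro G hopt
    by_contra hcon
    push_neg at hcon
    rw [hK] at hcon
    have h2h : 2 * edgeCount H ≤ isoCount G := by
      have : (2 * edgeCount H : ℝ) < (isoCount G : ℝ) + 1 := by push_cast; linarith
      exact_mod_cast by exact_mod_cast Nat.lt_succ_iff.mp (by exact_mod_cast this)
    exact (no_optimal_of_many_iso htree hedge (bridge G _ h2h)) hopt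
  have hKM : K ≤ M := by rw [hK]; linarith
  have hcheb := chebyshev hp0 hp1 (fun G => HasOptimalPacking H G) K hA (by rw [show ((n * n - n : ℕ) : ℝ) * (p * (1 - p) ^ (2 * (n - 2))) = M from rfl, hK]; linarith)
  have h2m := second_moment (n := n) hp0 hp1
  have hexp2 : (4 * (n - 2) - 4) + 4 = 2 * (n - 2) * 2 := by omega
  have hr : p ^ 2 * (1 - p) ^ (4 * (n - 2) - 4) = q ^ 2 * ((1 - p) ^ 4)⁻¹ := by
    rw [hq, mul_pow, ← pow_mul, eq_mul_inv_iff_mul_eq₀ (pow_ne_zero 4 h1p.ne'),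
      mul_assoc, ← pow_add, hexp2]
  rw [hr] at h2m
  have halg : C * (2 * q + C * (q ^ 2 * ((1 - p) ^ 4)⁻¹))
      = 2 * M + M ^ 2 * ((1 - p) ^ 4)⁻¹ := by rw [hMdef]; ring
  rw [halg] at h2m
  have hMK : (0 : ℝ) < M - K := by rw [hK]; linarith
  rw [le_div_iff₀ (pow_pos hMK 2)]
  calc erProb n p (fun G => HasOptimalPacking H G) * (M - K) ^ 2
      ≤ ∑ G : SimpleGraph (Fin n), wt n p G * (isoCount G : ℝ) ^ 2 - M ^ 2 := hcheb
    _ ≤ 2 * M + M ^ 2 * (((1 - p) ^ 4)⁻¹ - 1) := by linarith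

lemma erProb_not (n : ℕ) (p : ℝ) (A : SimpleGraph (Fin n) → Prop) :
    erProb n p (fun G => ¬ A G) = 1 - erProb n p A := by
  rw [eq_sub_iff_add_eq, erProb_eq_sum_wt, erProb_eq_sum_wt, ← Finset.sum_add_distrib,
    ← sum_wt n p]
  exact Finset.sum_congr rfl fun G _ => by by_cases h : A G <;> simp [h]

lemma erProb_nonneg {n : ℕ} {p : ℝ} (hp0 : 0 ≤ p) (hp1 : p ≤ 1)
    (A : SimpleGraph (Fin n) → Prop) : 0 ≤ erProb n p A := by
  rw [erProb_eq_sum_wt]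
  refine Finset.sum_nonneg fun G _ => ?_
  by_cases h : A G <;> simp [h, wt_nonneg hp0 hp1 G]

lemma exp_neg_two_mul_le {x : ℝ} (h0 : 0 ≤ x) (h1 : x ≤ 1 / 2) :
    Real.exp (-(2 * x)) ≤ 1 - x := by
  have h3 := Real.add_one_le_exp x
  have h2 : (1 + x) ^ 2 ≤ Real.exp (2 * x) := by
    have h4 : (1 + x) ^ 2 ≤ Real.exp x ^ 2 := by nlinarith [Real.exp_pos x]
    calc (1 + x) ^ 2 ≤ Real.exp x ^ 2 := h4
      _ = Real.exp (2 * x) := by rw [sq, ← Real.exp_add]; ring_nf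
  have hkey : 1 ≤ (1 - x) * Real.exp (2 * x) := by nlinarith [mul_nonneg h0 h0]
  rw [Real.exp_neg, inv_eq_one_div, div_le_iff₀ (Real.exp_pos _)]
  linarith

theorem statement4' {w : ℕ} (H : SimpleGraph (Fin w)) (htree : H.IsTree)
    (hedge : 2 ≤ edgeCount H) :
    ∃ c : ℝ, 0 < c ∧
      Filter.Tendsto
        (fun n => erProb n ((c * Real.log n / n)) (fun G => ¬ HasOptimalPacking H G))
        atTop (nhds 1) := by
  refine ⟨1/8, by norm_num, ?_⟩
  set p : ℕ → ℝ := fun n => 1/8 * Real.log n / n with hp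
  have hedgeR : (2 : ℝ) ≤ (edgeCount H : ℝ) := by exact_mod_cast hedge
  -- p is eventually in [0, 1/2]
  have hp0 : ∀ᶠ n : ℕ in atTop, 0 ≤ p n := by
    filter_upwards [Filter.eventually_ge_atTop 1] with n hn
    have h1 : (1 : ℝ) ≤ n := by exact_mod_cast hn
    have hlog : 0 ≤ Real.log n := Real.log_nonneg h1
    have hn0 : (0:ℝ) ≤ n := by linarith
    rw [hp]
    positivity
  have hptend : Tendsto p atTop (nhds 0) := by
    have h1 : Tendsto (fun x : ℝ => Real.log x / x) atTop (nhds 0) :=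
      Real.isLittleO_log_id_atTop.tendsto_div_nhds_zero
    have h2 : Tendsto (fun n : ℕ => Real.log n / n) atTop (nhds 0) :=
      h1.comp tendsto_natCast_atTop_atTop
    have h3 := h2.const_mul (1/8 : ℝ)
    rw [mul_zero] at h3
    refine h3.congr fun n => ?_
    rw [hp]; ring
  have hphalf : ∀ᶠ n : ℕ in atTop, p n ≤ 1/2 :=
    hptend.eventually (eventually_le_nhds (by norm_num))
  -- the mean M n
  set M : ℕ → ℝ := fun n => ((n*n - n : ℕ):ℝ) * (p n * (1 - p n)^(2*(n-2))) with hM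
  set φ : ℕ → ℝ := fun n => 1/16 * Real.exp (Real.log n / 2) with hφ
  have hφtend : Tendsto φ atTop atTop := by
    rw [hφ]
    apply Tendsto.const_mul_atTop (by norm_num : (0:ℝ) < 1/16)
    apply Real.tendsto_exp_atTop.comp
    apply Tendsto.atTop_div_const (by norm_num : (0:ℝ) < 2)
    exact Real.tendsto_log_atTop.comp tendsto_natCast_atTop_atTop
  have hMφ : ∀ᶠ n : ℕ in atTop, φ n ≤ M n := by
    filter_upwards [Filter.eventually_ge_atTop 3, hphalf, hp0] with n hn3 hhalf h0
    have hn3R : (3:ℝ) ≤ n := by exact_mod_cast hn3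
    have hnpos : (0:ℝ) < n := by linarith
    have hlog1 : 1 ≤ Real.log n := by
      rw [Real.le_log_iff_exp_le hnpos]
      calc Real.exp 1 ≤ 2.7182818286 := Real.exp_one_lt_d9.le
        _ ≤ n := by linarith
    have hpn : p n * n = 1/8 * Real.log n := by
      rw [hp]
      field_simp
    -- lower bound the power
    have step1 : Real.exp (-(2 * p n)) ≤ 1 - p n := exp_neg_two_mul_le h0 hhalf
    have step2 : Real.exp (-(2 * p n)) ^ (2*(n-2)) ≤ (1 - p n) ^ (2*(n-2)) :=
      pow_le_pow_left₀ (Real.exp_nonneg _) step1 _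
    have step3 : Real.exp (-(2 * p n)) ^ (2*(n-2))
        = Real.exp (((2*(n-2) : ℕ) : ℝ) * (-(2 * p n))) := (Real.exp_nat_mul _ _).symm
    have hcast : ((2*(n-2) : ℕ) : ℝ) ≤ 2 * n := by
      have : (2*(n-2) : ℕ) ≤ 2 * n := by omega
      exact_mod_cast this
    have hcast0 : (0:ℝ) ≤ ((2*(n-2) : ℕ) : ℝ) := Nat.cast_nonneg _
    have step4 : -(Real.log n / 2) ≤ ((2*(n-2) : ℕ) : ℝ) * (-(2 * p n)) := by
      have h5 : ((2*(n-2) : ℕ) : ℝ) * (2 * p n) ≤ (2 * n) * (2 * p n) := by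
        apply mul_le_mul_of_nonneg_right hcast
        linarith
      have h6 : (2 * (n:ℝ)) * (2 * p n) = Real.log n / 2 := by
        have : (2 * (n:ℝ)) * (2 * p n) = 4 * (p n * n) := by ring
        rw [this, hpn]; ring
      nlinarith [h5, h6]
    have step5 : Real.exp (-(Real.log n / 2)) ≤ (1 - p n) ^ (2*(n-2)) := by
      calc Real.exp (-(Real.log n / 2)) ≤ Real.exp (((2*(n-2) : ℕ) : ℝ) * (-(2 * p n))) :=
            Real.exp_le_exp.mpr step4
        _ = Real.exp (-(2 * p n)) ^ (2*(n-2)) := step3.symm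
        _ ≤ (1 - p n) ^ (2*(n-2)) := step2
    -- lower bound the count
    have hcount : ((n*n - n : ℕ):ℝ) = (n:ℝ) * n - n := by
      have hle : n ≤ n * n := Nat.le_mul_of_pos_left n (by omega)
      push_cast [Nat.cast_sub hle]
      ring
    have hc2 : (n:ℝ) * n / 2 ≤ ((n*n - n : ℕ):ℝ) := by
      rw [hcount]; nlinarith
    -- put everything together
    have hE0 : 0 ≤ Real.exp (-(Real.log n / 2)) := (Real.exp_pos _).le
    have e3 : p n * Real.exp (-(Real.log n / 2)) ≤ p n * (1 - p n) ^ (2*(n-2)) :=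
      mul_le_mul_of_nonneg_left step5 h0
    have e4 : ((n:ℝ) * n / 2) * (p n * Real.exp (-(Real.log n / 2))) ≤ M n := by
      rw [hM]
      apply mul_le_mul hc2 e3 (mul_nonneg h0 hE0)
      exact le_trans (by positivity) hc2
    have e5 : ((n:ℝ) * n / 2) * (p n * Real.exp (-(Real.log n / 2)))
        = (n:ℝ) * Real.log n * Real.exp (-(Real.log n / 2)) / 16 := by
      have : ((n:ℝ) * n / 2) * (p n * Real.exp (-(Real.log n / 2)))
          = ((n:ℝ) / 2) * (p n * n) * Real.exp (-(Real.log n / 2)) := by ring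
      rw [this, hpn]; ring
    have e6 : (n:ℝ) * Real.exp (-(Real.log n / 2)) = Real.exp (Real.log n / 2) := by
      rw [Real.exp_neg, ← div_eq_mul_inv, div_eq_iff (Real.exp_ne_zero _), ← Real.exp_add,
        add_halves, Real.exp_log hnpos]
    have e7 : φ n ≤ (n:ℝ) * Real.log n * Real.exp (-(Real.log n / 2)) / 16 := by
      rw [hφ]
      have h8 : (n:ℝ) * Real.log n * Real.exp (-(Real.log n / 2))
          ≥ (n:ℝ) * 1 * Real.exp (-(Real.log n / 2)) := by
        apply mul_le_mul_of_nonneg_right _ hE0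
        · exact mul_le_mul_of_nonneg_left hlog1 (by linarith)
      calc 1/16 * Real.exp (Real.log n / 2)
          = (n:ℝ) * 1 * Real.exp (-(Real.log n / 2)) / 16 := by rw [mul_one, e6]; ring
        _ ≤ (n:ℝ) * Real.log n * Real.exp (-(Real.log n / 2)) / 16 := by linarith
    linarith [e4, e5 ▸ e4, e7]
  have hMtend : Tendsto M atTop atTop := tendsto_atTop_mono' atTop hMφ hφtend
  -- δ n
  set δ : ℕ → ℝ := fun n => ((1 - p n)^4)⁻¹ - 1 with hδ
  have hδtend : Tendsto δ atTop (nhds 0) := by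
    have h1 : Tendsto (fun n => 1 - p n) atTop (nhds 1) := by
      have := tendsto_const_nhds (x := (1:ℝ)) (f := atTop (α := ℕ)) |>.sub hptend
      simpa using this
    have h2 : Tendsto (fun n => ((1 - p n)^4)) atTop (nhds 1) := by
      have := h1.pow 4
      simpa using this
    have h3 := h2.inv₀ (by norm_num)
    have h4 := h3.sub (tendsto_const_nhds (x := (1:ℝ)))
    simpa [hδ] using h4
  have hδ0 : ∀ᶠ n : ℕ in atTop, 0 ≤ δ n := by
    filter_upwards [hphalf, hp0] with n h1 h2
    have h3 : (1 - p n)^4 ≤ 1 := pow_le_one₀ (by linarith) (by linarith)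
    have h4 : (0:ℝ) < (1 - p n)^4 := pow_pos (by linarith) 4
    have h5 : (1:ℝ) ≤ ((1 - p n)^4)⁻¹ := by
      rw [le_inv_comm₀ (by norm_num) h4]
      simpa using h3
    rw [hδ]
    linarith
  -- the bound on the optimal-packing probability
  have hbound : ∀ᶠ n : ℕ in atTop,
      erProb n (p n) (fun G => HasOptimalPacking H G) ≤ 8 / M n + 4 * δ n := by
    filter_upwards [Filter.eventually_ge_atTop 3, hphalf, hp0, hδ0,
      hMtend.eventually_ge_atTop (4*(edgeCount H:ℝ) + 4)] with n hn3 hhalf h0 hd0 hMbig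
    have hKM : 2*(edgeCount H:ℝ) ≤ M n := by linarith
    have hmain := main_bound H htree hedge hn3 h0 hhalf hKM
    refine le_trans hmain ?_
    set K := 2*(edgeCount H:ℝ) - 1 with hK
    have hMpos : 0 < M n := by linarith
    have hhalfM : M n / 2 ≤ M n - K := by rw [hK]; linarith
    have hnum0 : 0 ≤ 2 * M n + (M n)^2 * δ n :=
      add_nonneg (by linarith) (mul_nonneg (sq_nonneg _) hd0)
    calc (2 * M n + (M n)^2 * δ n) / (M n - K)^2
        ≤ (2 * M n + (M n)^2 * δ n) / (M n / 2)^2 := by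
          apply div_le_div_of_nonneg_left hnum0 (pow_pos (by linarith : (0:ℝ) < M n / 2) 2) ?_
          apply pow_le_pow_left₀ (by positivity) hhalfM
      _ = 8 / M n + 4 * δ n := by
          field_simp
          ring
  -- conclude
  have hg : Tendsto (fun n => 8 / M n + 4 * δ n) atTop (nhds 0) := by
    have h1 := (hMtend.inv_tendsto_atTop).const_mul (8:ℝ)
    have h2 := hδtend.const_mul (4:ℝ)
    have h3 := h1.add h2
    simp only [mul_zero, add_zero] at h3
    refine h3.congr fun n => ?_
    simp [div_eq_mul_inv]
  have hOpt0 : Tendsto (fun n => erProb n (p n) (fun G => HasOptimalPacking H G))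
      atTop (nhds 0) := by
    refine tendsto_of_tendsto_of_tendsto_of_le_of_le' tendsto_const_nhds hg ?_ hbound
    filter_upwards [hp0, hphalf] with n h1 h2
    exact erProb_nonneg h1 (by linarith) _
  have hfinal := (tendsto_const_nhds (x := (1:ℝ)) (f := atTop (α := ℕ))).sub hOpt0
  rw [sub_zero] at hfinal
  refine hfinal.congr fun n => ?_
  rw [← erProb_not]


/-- For a fixed tree `H` with at least two edges, there is a constant `c > 0` such
that `G(n, c log n / n)` almost surely has no optimal `H`-packing. -/
theorem statement4 {w : ℕ} (H : SimpleGraph (Fin w)) (htree : H.IsTree)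
    (hedge : 2 ≤ edgeCount H) :
    ∃ c : ℝ, 0 < c ∧
      AlmostSurely (fun n => c * Real.log n / n)
        (fun _n G => ¬ HasOptimalPacking H G) := by
  obtain ⟨c, hc, ht⟩ := statement4' H htree hedge
  exact ⟨c, hc, ht⟩

end Paper
end

section
/- Let c ≥ 2 be an integer, let h_{s+1}, …, h_k and α_{s+1}, …, α_k be positive integers, and write S = α_{s+1} + ⋯ + α_k. Suppose that 2000·c²·α_i / S ≥ 100 for every i = s+1, …, k. For each i set t_i = ⌊2000·c²·α_i / S⌋, let h = t_{s+1}·h_{s+1} + ⋯ + t_k·h_k, let E' = α_{s+1}·h_{s+1} + ⋯ + α_k·h_k, and let q = ⌊0.99·E'/h⌋. Then t_i · q ≤ α_i for every i = s+1, …, k. -/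
open Filter

namespace Paper

/-- The arithmetic claim from the proof of Lemma 2.2: with
`t i = ⌊2000 c² α i / S⌋`, `h = ∑ t i * h i`, `E' = ∑ α i * h i` and
`q = ⌊0.99 E' / h⌋`, one has `t i * q ≤ α i` for every `i`. -/
theorem statement9 (c : ℕ) (hc : 2 ≤ c) {k : ℕ} (h α : Fin k → ℕ)
    (hh : ∀ i, 0 < h i) (hα : ∀ i, 0 < α i)
    (S : ℕ) (hS : S = ∑ i, α i)
    (hbig : ∀ i, (100 : ℝ) ≤ 2000 * (c : ℝ) ^ 2 * (α i : ℝ) / (S : ℝ))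
    (t : Fin k → ℕ) (ht : ∀ i, t i = ⌊2000 * (c : ℝ) ^ 2 * (α i : ℝ) / (S : ℝ)⌋₊)
    (hsum : ℕ) (hhsum : hsum = ∑ i, t i * h i)
    (E' : ℕ) (hE' : E' = ∑ i, α i * h i)
    (q : ℕ) (hq : q = ⌊0.99 * (E' : ℝ) / (hsum : ℝ)⌋₊) :
    ∀ i, t i * q ≤ α i := by
  intro i
  set X : Fin k → ℝ := fun j => 2000 * (c : ℝ) ^ 2 * (α j : ℝ) / (S : ℝ) with hX
  have hSpos : 0 < S := by
    have h1 := Finset.single_le_sum (f := α) (fun j _ => Nat.zero_le _) (Finset.mem_univ i)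
    have h2 := hα i
    omega
  have hSR : (0 : ℝ) < (S : ℝ) := by exact_mod_cast hSpos
  have hcR : (0 : ℝ) < 2000 * (c : ℝ) ^ 2 := by positivity
  have htub : ∀ j, (t j : ℝ) ≤ X j := by
    intro j
    rw [ht j]
    exact Nat.floor_le (le_trans (by norm_num) (hbig j))
  have htlb : ∀ j, 0.99 * X j ≤ (t j : ℝ) := by
    intro j
    have h1 : X j - 1 < (t j : ℝ) := by
      rw [ht j]
      exact Nat.sub_one_lt_floor _
    have h2 : (100 : ℝ) ≤ X j := hbig j
    nlinarith
  have hEsum : 0.99 * (2000 * (c : ℝ) ^ 2 / (S : ℝ)) * (E' : ℝ) ≤ (hsum : ℝ) := by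
    rw [hhsum, hE']
    push_cast
    rw [Finset.mul_sum]
    apply Finset.sum_le_sum
    intro j _
    have := htlb j
    have hhj : (0 : ℝ) ≤ (h j : ℝ) := Nat.cast_nonneg _
    have : 0.99 * X j * (h j : ℝ) ≤ (t j : ℝ) * (h j : ℝ) := by nlinarith
    calc 0.99 * (2000 * (c : ℝ) ^ 2 / (S : ℝ)) * ((α j : ℝ) * (h j : ℝ))
        = 0.99 * X j * (h j : ℝ) := by rw [hX]; ring
      _ ≤ (t j : ℝ) * (h j : ℝ) := this
  have hEpos : (0 : ℝ) < (E' : ℝ) := by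
    have : 0 < E' := by
      rw [hE']
      have h1 : α i * h i ≤ ∑ j, α j * h j :=
        Finset.single_le_sum (f := fun j => α j * h j) (fun j _ => Nat.zero_le _)
          (Finset.mem_univ i)
      have h2 := Nat.mul_pos (hα i) (hh i)
      omega
    exact_mod_cast this
  have hsumpos : (0 : ℝ) < (hsum : ℝ) := by
    have h1 := hEsum
    have : 0 < 0.99 * (2000 * (c : ℝ) ^ 2 / (S : ℝ)) * (E' : ℝ) := by positivity
    linarith
  have hqle : (q : ℝ) ≤ (S : ℝ) / (2000 * (c : ℝ) ^ 2) := by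
    rw [hq]
    have h1 : (⌊0.99 * (E' : ℝ) / (hsum : ℝ)⌋₊ : ℝ) ≤ 0.99 * (E' : ℝ) / (hsum : ℝ) :=
      Nat.floor_le (by positivity)
    have h2 : 0.99 * (E' : ℝ) / (hsum : ℝ) ≤ (S : ℝ) / (2000 * (c : ℝ) ^ 2) := by
      rw [div_le_div_iff₀ hsumpos hcR]
      have hdiv : 2000 * (c : ℝ) ^ 2 / (S : ℝ) * (S : ℝ) = 2000 * (c : ℝ) ^ 2 :=
        div_mul_cancel₀ _ (ne_of_gt hSR)
      nlinarith [mul_le_mul_of_nonneg_right hEsum hSR.le]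
    linarith
  have hfin : ((t i * q : ℕ) : ℝ) ≤ (α i : ℝ) := by
    push_cast
    have h1 := htub i
    have h2 := hqle
    have hq0 : (0 : ℝ) ≤ (q : ℝ) := Nat.cast_nonneg _
    have ht0 : (0 : ℝ) ≤ (t i : ℝ) := Nat.cast_nonneg _
    have hXnn : (0 : ℝ) ≤ X i := by linarith [hbig i]
    have h3 : (t i : ℝ) * (q : ℝ) ≤ X i * ((S : ℝ) / (2000 * (c : ℝ) ^ 2)) :=
      mul_le_mul h1 h2 hq0 hXnn
    have h4 : X i * ((S : ℝ) / (2000 * (c : ℝ) ^ 2)) = (α i : ℝ) := by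
      rw [hX]
      field_simp
    linarith
  exact_mod_cast hfin

end Paper
end
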